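/- Let d ≥ 1 be an integer, 1 < α₀ < ϑ₀ < 2, c₂ ≥ 1, and κ, η > 0. There exists a constant C ≥ 1, depending only on d, α₀, ϑ₀ and c₂, such that for every α ∈ [α₀, ϑ₀], every pair of invertible real d×d matrices A, B satisfying c₂^{−1}·‖v‖² ≤ ‖Av‖² ≤ c₂·‖v‖² and c₂^{−1}·‖v‖² ≤ ‖Bv‖² ≤ c₂·‖v‖² for all v ∈ ℝ^d, and every pair of points x, y ∈ ℝ^d with 0 < ‖x−y‖ ≤ min(κ, η)/(4c₂²): ∫_{ℝ^d} ( q_Ψ(z) + q_{Ψ⁻¹}(z) ) dz ≥ C^{−1}·‖x−y‖^{−α}. -/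

import Mathlib

open Real MeasureTheory

/-- The constant `c_{d,α} = α·2^(α−2)·Γ((d+α)/2) / (π^(d/2)·Γ((2−α)/2))`. -/
noncomputable def stableConst (d : ℕ) (α : ℝ) : ℝ :=
  α * (2 : ℝ) ^ (α - 2) * Real.Gamma ((d + α) / 2) /
    (Real.pi ^ ((d : ℝ) / 2) * Real.Gamma ((2 - α) / 2))

/-- The radial truncation `(w)_κ = (min(κ,‖w‖)/‖w‖)·w`. -/
noncomputable def truncVec {d : ℕ} (κ : ℝ) (w : EuclideanSpace ℝ (Fin d)) :
    EuclideanSpace ℝ (Fin d) :=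
  (min κ ‖w‖ / ‖w‖) • w

/-- The map `Ψ(z) = B⁻¹(Az + (x−y)_κ)`. -/
noncomputable def psiMap {d : ℕ} (κ : ℝ) (A B : Matrix (Fin d) (Fin d) ℝ)
    (x y : EuclideanSpace ℝ (Fin d)) (z : EuclideanSpace ℝ (Fin d)) :
    EuclideanSpace ℝ (Fin d) :=
  Matrix.toEuclideanLin B⁻¹ (Matrix.toEuclideanLin A z + truncVec κ (x - y))

/-- The inverse map `Ψ⁻¹(z) = A⁻¹(Bz − (x−y)_κ)`. -/
noncomputable def psiInvMap {d : ℕ} (κ : ℝ) (A B : Matrix (Fin d) (Fin d) ℝ)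
    (x y : EuclideanSpace ℝ (Fin d)) (z : EuclideanSpace ℝ (Fin d)) :
    EuclideanSpace ℝ (Fin d) :=
  Matrix.toEuclideanLin A⁻¹ (Matrix.toEuclideanLin B z - truncVec κ (x - y))

/-- The density
`min( 𝟙_{0<‖z‖≤η}·c_{d,α}·‖z‖^{−(d+α)},
      𝟙_{0<‖Φ(z)‖≤η}·c_{d,α}·detfac·‖Φ(z)‖^{−(d+α)} )`. -/
noncomputable def couplingDensity {d : ℕ} (α η detfac : ℝ)
    (Φ : EuclideanSpace ℝ (Fin d) → EuclideanSpace ℝ (Fin d))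
    (z : EuclideanSpace ℝ (Fin d)) : ℝ :=
  min (if 0 < ‖z‖ ∧ ‖z‖ ≤ η then stableConst d α * ‖z‖ ^ (-((d : ℝ) + α)) else 0)
      (if 0 < ‖Φ z‖ ∧ ‖Φ z‖ ≤ η then
          stableConst d α * detfac * ‖Φ z‖ ^ (-((d : ℝ) + α)) else 0)


/-! Both `Ψ` and `Ψ⁻¹` are affine bijections `z ↦ Lz + u` with `‖L‖ ≤ c₂²` and `‖u‖ ≤ c₂‖x − y‖`,
and the two determinant weights `|det (A⁻¹B)|`, `|det (B⁻¹A)|` are reciprocal, so one of them is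
at least `1`. For that density, every `z` in the ball of radius `ρ = ‖x − y‖` has `‖z‖` and
`‖Φ z‖` at most `2c₂²ρ ≤ η`, so away from two points the density is at least
`c_{d,α} (2c₂²ρ)^{-(d+α)}`; integrating over the ball gives `≳ ρ^d · ρ^{-(d+α)} = ρ^{-α}`.
The constant is uniform in `α` because `c_{d,α}` is continuous and positive on the compact
interval `[α₀, ϑ₀]`. -/

open Metric Set Function

lemma stableConst_pos {d : ℕ} {α : ℝ} (h0 : 0 < α) (h2 : α < 2) : 0 < stableConst d α := by
  have := Gamma_pos_of_pos (show 0 < (2 - α) / 2 by linarith)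
  have := Gamma_pos_of_pos (show 0 < ((d : ℝ) + α) / 2 by positivity)
  unfold stableConst
  positivity

lemma continuousOn_stableConst (d : ℕ) : ContinuousOn (stableConst d) (Ioo 0 2) := by
  have hΓ : ContinuousOn Gamma (Ioi 0) := differentiableOn_Gamma_Ioi.continuousOn
  have hΓ₁ : ContinuousOn (fun α : ℝ => Gamma ((d + α) / 2)) (Ioo 0 2) :=
    hΓ.comp (by fun_prop) fun α hα => show 0 < ((d : ℝ) + α) / 2 by
      have := hα.1; positivity
  have hΓ₂ : ContinuousOn (fun α : ℝ => Gamma ((2 - α) / 2)) (Ioo 0 2) :=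
    hΓ.comp (by fun_prop) fun α hα => show 0 < (2 - α) / 2 by linarith [hα.2]
  have hpow : Continuous fun α : ℝ => (2 : ℝ) ^ (α - 2) :=
    continuous_const.rpow (by fun_prop) fun _ => Or.inl two_ne_zero
  refine ContinuousOn.div (by fun_prop) (by fun_prop) fun α hα => ?_
  have := Gamma_pos_of_pos (show 0 < (2 - α) / 2 by linarith [hα.2])
  positivity

lemma exists_pos_le_stableConst_mul_rpow (d : ℕ) {a b c v : ℝ} (ha : 0 < a) (hb : b < 2)
    (hc : 0 < c) (hv : 0 < v) :
    ∃ K > 0, ∀ α ∈ Icc a b, K ≤ stableConst d α * c ^ (-((d : ℝ) + α)) * v := by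
  have hsub : Icc a b ⊆ Ioo 0 2 := Icc_subset_Ioo ha hb
  have hcont : Continuous fun α : ℝ => c ^ (-((d : ℝ) + α)) :=
    continuous_const.rpow (by fun_prop) fun _ => Or.inl hc.ne'
  refine isCompact_Icc.exists_forall_le'
    ((((continuousOn_stableConst d).mono hsub).mul hcont.continuousOn).mul continuousOn_const)
    fun α hα => ?_
  exact mul_pos (mul_pos (stableConst_pos (hsub hα).1 (hsub hα).2) (rpow_pos_of_pos hc _)) hv

section RadialProfile

variable {a s t r η : ℝ}

lemma ite_rpow_le (ha : 0 ≤ a) (hs : 0 ≤ s) (hr : 0 < r) (hrt : r ≤ t) :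
    (if 0 < t ∧ t ≤ η then a * t ^ (-s) else 0) ≤ a * r ^ (-s) := by
  split_ifs
  · exact mul_le_mul_of_nonneg_left (rpow_le_rpow_of_nonpos hr hrt (neg_nonpos.2 hs)) ha
  · positivity

lemma le_ite_rpow (ha : 0 ≤ a) (hs : 0 ≤ s) (ht : 0 < t) (htr : t ≤ r) (hrη : r ≤ η) :
    a * r ^ (-s) ≤ (if 0 < t ∧ t ≤ η then a * t ^ (-s) else 0) := by
  rw [if_pos ⟨ht, htr.trans hrη⟩]
  exact mul_le_mul_of_nonneg_left (rpow_le_rpow_of_nonpos ht htr (neg_nonpos.2 hs)) ha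

end RadialProfile

section CouplingDensity

variable {d : ℕ} {α η detfac : ℝ} {Φ : EuclideanSpace ℝ (Fin d) → EuclideanSpace ℝ (Fin d)}

lemma couplingDensity_nonneg (h0 : 0 < α) (h2 : α < 2) (hdet : 0 ≤ detfac)
    (z : EuclideanSpace ℝ (Fin d)) : 0 ≤ couplingDensity α η detfac Φ z := by
  have := stableConst_pos (d := d) h0 h2
  unfold couplingDensity
  refine le_min ?_ ?_ <;> split_ifs <;> positivity

lemma measurable_couplingDensity (hΦ : Measurable Φ) :
    Measurable (couplingDensity α η detfac Φ) := by
  have hn := hΦ.norm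
  unfold couplingDensity
  refine Measurable.min ?_ ?_ <;> refine Measurable.ite ?_ (by fun_prop) measurable_const <;>
    measurability

lemma le_couplingDensity (h0 : 0 < α) (h2 : α < 2) (hdet : 1 ≤ detfac) {r : ℝ} (hrη : r ≤ η)
    {z : EuclideanSpace ℝ (Fin d)} (hz : 0 < ‖z‖) (hzr : ‖z‖ ≤ r) (hΦz : 0 < ‖Φ z‖)
    (hΦzr : ‖Φ z‖ ≤ r) :
    stableConst d α * r ^ (-((d : ℝ) + α)) ≤ couplingDensity α η detfac Φ z := by
  have hc := (stableConst_pos (d := d) h0 h2).le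
  refine le_min (le_ite_rpow hc (by positivity) hz hzr hrη)
    ((le_ite_rpow (mul_nonneg hc (zero_le_one.trans hdet)) (by positivity) hΦz hΦzr
      hrη).trans' ?_)
  exact mul_le_mul_of_nonneg_right (le_mul_of_one_le_right hc hdet)
    (rpow_nonneg (hz.le.trans hzr) _)

lemma integrable_couplingDensity (h0 : 0 < α) (h2 : α < 2) (hdet : 0 ≤ detfac)
    (hΦ : Continuous Φ) (hΦ0 : Φ 0 ≠ 0) : Integrable (couplingDensity α η detfac Φ) := by
  set δ := ‖Φ 0‖ / 2
  have hδ : δ < ‖Φ 0‖ := half_lt_self (norm_pos_iff.2 hΦ0)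
  -- the singularity of the first factor at `0` is cut off by the second one
  obtain ⟨r, hr, hΦr⟩ : ∃ r > 0, ∀ z ∈ ball 0 r, δ < ‖Φ z‖ :=
    eventually_nhds_iff_ball.1 ((hΦ.norm.tendsto 0).eventually (eventually_gt_nhds hδ))
  have hc := (stableConst_pos (d := d) h0 h2).le
  have hsupp : support (couplingDensity α η detfac Φ) ⊆ closedBall 0 η := by
    intro z hz
    by_contra hzη
    refine hz (le_antisymm ((min_le_left _ _).trans (if_neg fun h => hzη ?_).le)
      (couplingDensity_nonneg h0 h2 hdet z))
    exact mem_closedBall_zero_iff.2 h.2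
  rw [← integrableOn_iff_integrable_of_support_subset hsupp]
  refine Measure.integrableOn_of_bounded measure_closedBall_lt_top.ne
    (measurable_couplingDensity hΦ.measurable).aestronglyMeasurable
    (M := stableConst d α * r ^ (-((d : ℝ) + α)) +
      stableConst d α * detfac * δ ^ (-((d : ℝ) + α)))
    (ae_of_all _ fun z => ?_)
  rw [norm_of_nonneg (couplingDensity_nonneg h0 h2 hdet z)]
  rcases le_or_gt r ‖z‖ with hz | hz
  · exact (min_le_left _ _).trans
      ((ite_rpow_le hc (by positivity) hr hz).trans (le_add_of_nonneg_right (by positivity)))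
  · exact (min_le_right _ _).trans ((ite_rpow_le (by positivity) (by positivity)
      (half_pos (norm_pos_iff.2 hΦ0))
      (hΦr z (mem_ball_zero_iff.2 hz)).le).trans (le_add_of_nonneg_left (by positivity)))

lemma le_integral_couplingDensity (hd : 1 ≤ d) (h0 : 0 < α) (h2 : α < 2) (hdet : 1 ≤ detfac)
    (hΦ : Continuous Φ) (hΦinj : Injective Φ) (hΦ0 : Φ 0 ≠ 0) {ρ R : ℝ} (hρ : 0 < ρ)
    (hR : 1 ≤ R) (hRη : R * ρ ≤ η) (hball : ∀ z ∈ ball 0 ρ, ‖Φ z‖ ≤ R * ρ) :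
    stableConst d α * R ^ (-((d : ℝ) + α)) *
        (volume (ball (0 : EuclideanSpace ℝ (Fin d)) 1)).toReal * ρ ^ (-α)
      ≤ ∫ z, couplingDensity α η detfac Φ z := by
  have : Nontrivial (EuclideanSpace ℝ (Fin d)) :=
    Module.nontrivial_of_finrank_pos (R := ℝ) (by rw [finrank_euclideanSpace_fin]; omega)
  -- off `N` neither indicator in the density vanishes
  set N : Set (EuclideanSpace ℝ (Fin d)) := {0} ∪ Φ ⁻¹' {0}
  have hN : volume N = 0 :=
    measure_union_null (measure_singleton 0)
      ((subsingleton_singleton.preimage hΦinj).measure_zero _)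
  set S := ball 0 ρ \ N
  have hSmeas : MeasurableSet S :=
    measurableSet_ball.diff ((measurableSet_singleton 0).union
      (hΦ.measurable (measurableSet_singleton 0)))
  have hSvol : volume S = volume (ball (0 : EuclideanSpace ℝ (Fin d)) ρ) := measure_sdiff_null hN
  have hlow : ∀ z ∈ S, stableConst d α * (R * ρ) ^ (-((d : ℝ) + α))
      ≤ couplingDensity α η detfac Φ z := by
    rintro z ⟨hzρ, hzN⟩
    simp only [N, mem_union, mem_singleton_iff, mem_preimage, not_or] at hzN
    exact le_couplingDensity h0 h2 hdet hRη (norm_pos_iff.2 hzN.1)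
      ((mem_ball_zero_iff.1 hzρ).le.trans (le_mul_of_one_le_left hρ.le hR))
      (norm_pos_iff.2 hzN.2) (hball z hzρ)
  have hint := integrable_couplingDensity (η := η) h0 h2 (zero_le_one.trans hdet) hΦ hΦ0
  have hρα : ρ ^ (-α) = ρ ^ (-((d : ℝ) + α)) * ρ ^ d := by
    rw [← rpow_natCast, ← rpow_add hρ]
    ring_nf
  calc stableConst d α * R ^ (-((d : ℝ) + α)) *
        (volume (ball (0 : EuclideanSpace ℝ (Fin d)) 1)).toReal * ρ ^ (-α)
      = stableConst d α * (R * ρ) ^ (-((d : ℝ) + α)) * (volume S).toReal := by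
        rw [hSvol, Measure.addHaar_ball _ _ hρ.le, finrank_euclideanSpace_fin, ENNReal.toReal_mul,
          ENNReal.toReal_ofReal (by positivity), mul_rpow (by positivity) hρ.le, hρα]
        ring
    _ ≤ ∫ z in S, couplingDensity α η detfac Φ z :=
        setIntegral_ge_of_const_le_real hSmeas (hSvol ▸ measure_ball_lt_top.ne) hlow
          hint.integrableOn
    _ ≤ ∫ z, couplingDensity α η detfac Φ z :=
        setIntegral_le_integral hint
          (ae_of_all _ (couplingDensity_nonneg h0 h2 (zero_le_one.trans hdet)))

end CouplingDensity

lemma le_mul_of_sq_le_mul_sq {a b c : ℝ} (hc : 1 ≤ c) (ha : 0 ≤ a) (hb : 0 ≤ b)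
    (h : a ^ 2 ≤ c * b ^ 2) : a ≤ c * b :=
  (sq_le_sq₀ ha (by positivity)).1 (h.trans (by nlinarith [sq_nonneg b]))

section MatrixBounds

open Matrix

variable {d : ℕ} {M : Matrix (Fin d) (Fin d) ℝ} {c : ℝ}

lemma toEuclideanLin_apply_inv_apply (hM : IsUnit M) (v : EuclideanSpace ℝ (Fin d)) :
    toEuclideanLin M (toEuclideanLin M⁻¹ v) = v := by
  rw [← LinearMap.comp_apply, ← toLpLin_mul_same,
    mul_nonsing_inv _ ((isUnit_iff_isUnit_det M).1 hM)]
  simp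

lemma toEuclideanLin_inv_apply_apply (hM : IsUnit M) (v : EuclideanSpace ℝ (Fin d)) :
    toEuclideanLin M⁻¹ (toEuclideanLin M v) = v := by
  rw [← LinearMap.comp_apply, ← toLpLin_mul_same,
    nonsing_inv_mul _ ((isUnit_iff_isUnit_det M).1 hM)]
  simp

lemma norm_toEuclideanLin_le (hc : 1 ≤ c)
    (hM : ∀ v : EuclideanSpace ℝ (Fin d), ‖toEuclideanLin M v‖ ^ 2 ≤ c * ‖v‖ ^ 2)
    (v : EuclideanSpace ℝ (Fin d)) : ‖toEuclideanLin M v‖ ≤ c * ‖v‖ :=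
  le_mul_of_sq_le_mul_sq hc (norm_nonneg _) (norm_nonneg _) (hM v)

lemma norm_toEuclideanLin_inv_le (hc : 1 ≤ c) (hM : IsUnit M)
    (hM' : ∀ v : EuclideanSpace ℝ (Fin d), c⁻¹ * ‖v‖ ^ 2 ≤ ‖toEuclideanLin M v‖ ^ 2)
    (v : EuclideanSpace ℝ (Fin d)) : ‖toEuclideanLin M⁻¹ v‖ ≤ c * ‖v‖ := by
  refine le_mul_of_sq_le_mul_sq hc (norm_nonneg _) (norm_nonneg _) ?_
  have := hM' (toEuclideanLin M⁻¹ v)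
  rw [toEuclideanLin_apply_inv_apply hM, inv_mul_le_iff₀ (by linarith)] at this
  exact this

lemma one_le_abs_det_inv_mul_or {A B : Matrix (Fin d) (Fin d) ℝ} (hA : IsUnit A) (hB : IsUnit B) :
    1 ≤ |(A⁻¹ * B).det| ∨ 1 ≤ |(B⁻¹ * A).det| := by
  have h : |(A⁻¹ * B).det| * |(B⁻¹ * A).det| = 1 := by
    rw [← abs_mul, ← det_mul, Matrix.mul_assoc, ← Matrix.mul_assoc B,
      mul_nonsing_inv _ ((isUnit_iff_isUnit_det B).1 hB), Matrix.one_mul,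
      nonsing_inv_mul _ ((isUnit_iff_isUnit_det A).1 hA), det_one, abs_one]
  by_contra! h'
  nlinarith [abs_nonneg (A⁻¹ * B).det, abs_nonneg (B⁻¹ * A).det]

end MatrixBounds

section PsiMaps

variable {d : ℕ} {κ : ℝ} {A B : Matrix (Fin d) (Fin d) ℝ} {x y : EuclideanSpace ℝ (Fin d)}

lemma norm_truncVec (hκ : 0 ≤ κ) (w : EuclideanSpace ℝ (Fin d)) :
    ‖truncVec κ w‖ = min κ ‖w‖ := by
  rcases eq_or_ne w 0 with rfl | hw
  · simp [truncVec, hκ]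
  · have hw' := norm_pos_iff.2 hw
    rw [truncVec, norm_smul, norm_of_nonneg (by positivity), div_mul_cancel₀ _ hw'.ne']

lemma truncVec_neg (w : EuclideanSpace ℝ (Fin d)) : truncVec κ (-w) = -truncVec κ w := by
  simp [truncVec]

lemma psiMap_eq_psiInvMap : psiMap κ A B x y = psiInvMap κ B A y x := by
  funext z
  rw [psiMap, psiInvMap, ← neg_sub x y, truncVec_neg, sub_neg_eq_add]

lemma continuous_psiInvMap : Continuous (psiInvMap κ A B x y) :=
  (Matrix.toEuclideanLin A⁻¹).continuous_of_finiteDimensional.comp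
    ((Matrix.toEuclideanLin B).continuous_of_finiteDimensional.sub continuous_const)

lemma psiInvMap_injective (hA : IsUnit A) (hB : IsUnit B) : Injective (psiInvMap κ A B x y) := by
  intro z z' h
  have h' := congrArg (Matrix.toEuclideanLin A) h
  simp only [psiInvMap, toEuclideanLin_apply_inv_apply hA, sub_left_inj] at h'
  simpa only [toEuclideanLin_inv_apply_apply hB] using congrArg (Matrix.toEuclideanLin B⁻¹) h'

lemma psiInvMap_zero_ne_zero (hA : IsUnit A) (hκ : 0 < κ) (hxy : x ≠ y) :
    psiInvMap κ A B x y 0 ≠ 0 := by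
  intro h
  have h' := congrArg (Matrix.toEuclideanLin A) h
  rw [psiInvMap, toEuclideanLin_apply_inv_apply hA, map_zero, map_zero, zero_sub, neg_eq_zero] at h'
  have := norm_truncVec hκ.le (x - y)
  rw [h', norm_zero] at this
  exact (lt_min hκ (norm_pos_iff.2 (sub_ne_zero.2 hxy))).ne this

lemma norm_psiInvMap_le {c : ℝ} (hc : 1 ≤ c) (hA : IsUnit A)
    (hAc : ∀ v : EuclideanSpace ℝ (Fin d), c⁻¹ * ‖v‖ ^ 2 ≤ ‖Matrix.toEuclideanLin A v‖ ^ 2)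
    (hBc : ∀ v : EuclideanSpace ℝ (Fin d), ‖Matrix.toEuclideanLin B v‖ ^ 2 ≤ c * ‖v‖ ^ 2)
    (hκ : 0 ≤ κ) (z : EuclideanSpace ℝ (Fin d)) :
    ‖psiInvMap κ A B x y z‖ ≤ c * (c * ‖z‖ + ‖x - y‖) := by
  refine (norm_toEuclideanLin_inv_le hc hA hAc _).trans (mul_le_mul_of_nonneg_left ?_ (by linarith))
  refine (norm_sub_le _ _).trans (add_le_add (norm_toEuclideanLin_le hc hBc z) ?_)
  exact (norm_truncVec hκ _).trans_le (min_le_right _ _)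

lemma le_integral_couplingDensity_psiInvMap (hd : 1 ≤ d) {α η detfac c : ℝ} (h0 : 0 < α)
    (h2 : α < 2) (hc : 1 ≤ c) (hA : IsUnit A) (hB : IsUnit B)
    (hAc : ∀ v : EuclideanSpace ℝ (Fin d), c⁻¹ * ‖v‖ ^ 2 ≤ ‖Matrix.toEuclideanLin A v‖ ^ 2)
    (hBc : ∀ v : EuclideanSpace ℝ (Fin d), ‖Matrix.toEuclideanLin B v‖ ^ 2 ≤ c * ‖v‖ ^ 2)
    (hκ : 0 < κ) (hxy : x ≠ y) (hη : 2 * c ^ 2 * ‖x - y‖ ≤ η) (hdet : 1 ≤ detfac) :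
    stableConst d α * (2 * c ^ 2) ^ (-((d : ℝ) + α)) *
        (volume (ball (0 : EuclideanSpace ℝ (Fin d)) 1)).toReal * ‖x - y‖ ^ (-α)
      ≤ ∫ z, couplingDensity α η detfac (psiInvMap κ A B x y) z := by
  refine le_integral_couplingDensity hd h0 h2 hdet continuous_psiInvMap
    (psiInvMap_injective hA hB) (psiInvMap_zero_ne_zero hA hκ hxy)
    (norm_pos_iff.2 (sub_ne_zero.2 hxy)) (by nlinarith) hη fun z hz => ?_
  have hz := mem_ball_zero_iff.1 hz
  calc ‖psiInvMap κ A B x y z‖ ≤ c * (c * ‖z‖ + ‖x - y‖) := norm_psiInvMap_le hc hA hAc hBc hκ.le z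
    _ ≤ c * (c * ‖x - y‖ + ‖x - y‖) := by gcongr
    _ ≤ 2 * c ^ 2 * ‖x - y‖ := by
      have hc' : 0 ≤ c * (c - 1) := mul_nonneg (by linarith) (sub_nonneg.2 hc)
      nlinarith [mul_nonneg hc' (norm_nonneg (x - y))]

lemma le_integral_couplingDensity_add (hd : 1 ≤ d) {α η c : ℝ} (h0 : 0 < α) (h2 : α < 2)
    (hc : 1 ≤ c) (hA : IsUnit A) (hB : IsUnit B)
    (hAc : ∀ v : EuclideanSpace ℝ (Fin d),
      c⁻¹ * ‖v‖ ^ 2 ≤ ‖Matrix.toEuclideanLin A v‖ ^ 2 ∧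
        ‖Matrix.toEuclideanLin A v‖ ^ 2 ≤ c * ‖v‖ ^ 2)
    (hBc : ∀ v : EuclideanSpace ℝ (Fin d),
      c⁻¹ * ‖v‖ ^ 2 ≤ ‖Matrix.toEuclideanLin B v‖ ^ 2 ∧
        ‖Matrix.toEuclideanLin B v‖ ^ 2 ≤ c * ‖v‖ ^ 2)
    (hκ : 0 < κ) (hxy : x ≠ y) (hη : 2 * c ^ 2 * ‖x - y‖ ≤ η) :
    stableConst d α * (2 * c ^ 2) ^ (-((d : ℝ) + α)) *
        (volume (ball (0 : EuclideanSpace ℝ (Fin d)) 1)).toReal * ‖x - y‖ ^ (-α)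
      ≤ ∫ z, (couplingDensity α η |(A⁻¹ * B).det| (psiInvMap κ A B x y) z +
          couplingDensity α η |(B⁻¹ * A).det| (psiMap κ A B x y) z) := by
  have hint₁ : Integrable (couplingDensity α η |(A⁻¹ * B).det| (psiInvMap κ A B x y)) :=
    integrable_couplingDensity h0 h2 (abs_nonneg _) continuous_psiInvMap
      (psiInvMap_zero_ne_zero hA hκ hxy)
  have hint₂ : Integrable (couplingDensity α η |(B⁻¹ * A).det| (psiMap κ A B x y)) := by
    rw [psiMap_eq_psiInvMap]
    exact integrable_couplingDensity h0 h2 (abs_nonneg _) continuous_psiInvMap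
      (psiInvMap_zero_ne_zero hB hκ hxy.symm)
  rw [integral_add hint₁ hint₂]
  rcases one_le_abs_det_inv_mul_or hA hB with hdet | hdet
  · refine (le_integral_couplingDensity_psiInvMap hd h0 h2 hc hA hB (fun v => (hAc v).1)
      (fun v => (hBc v).2) hκ hxy hη hdet).trans (le_add_of_nonneg_right ?_)
    exact integral_nonneg (couplingDensity_nonneg h0 h2 (abs_nonneg _))
  · have h := le_integral_couplingDensity_psiInvMap hd h0 h2 hc hB hA (fun v => (hBc v).1)
      (fun v => (hAc v).2) hκ hxy.symm (norm_sub_rev x y ▸ hη) hdet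
    rw [← psiMap_eq_psiInvMap, norm_sub_rev] at h
    exact h.trans (le_add_of_nonneg_left (integral_nonneg
      (couplingDensity_nonneg h0 h2 (abs_nonneg _))))

end PsiMaps

theorem stmt3_general (d : ℕ) (hd : 1 ≤ d) (α₀ ϑ₀ c₂ : ℝ)
    (hα₀ : 1 < α₀) (hϑ₀ : ϑ₀ < 2) (hc₂ : 1 ≤ c₂) :
    ∃ C ≥ (1 : ℝ), ∀ κ η : ℝ, 0 < κ → 0 < η → ∀ α ∈ Set.Icc α₀ ϑ₀,
      ∀ A B : Matrix (Fin d) (Fin d) ℝ, IsUnit A → IsUnit B →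
      (∀ v : EuclideanSpace ℝ (Fin d),
        c₂⁻¹ * ‖v‖ ^ 2 ≤ ‖Matrix.toEuclideanLin A v‖ ^ 2 ∧
          ‖Matrix.toEuclideanLin A v‖ ^ 2 ≤ c₂ * ‖v‖ ^ 2) →
      (∀ v : EuclideanSpace ℝ (Fin d),
        c₂⁻¹ * ‖v‖ ^ 2 ≤ ‖Matrix.toEuclideanLin B v‖ ^ 2 ∧
          ‖Matrix.toEuclideanLin B v‖ ^ 2 ≤ c₂ * ‖v‖ ^ 2) →
      ∀ x y : EuclideanSpace ℝ (Fin d),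
        0 < ‖x - y‖ → ‖x - y‖ ≤ min κ η / (4 * c₂ ^ 2) →
        C⁻¹ * ‖x - y‖ ^ (-α)
          ≤ ∫ z : EuclideanSpace ℝ (Fin d),
              (couplingDensity α η |(A⁻¹ * B).det| (psiInvMap κ A B x y) z +
                couplingDensity α η |(B⁻¹ * A).det| (psiMap κ A B x y) z) := by
  have hvol : 0 < (volume (ball (0 : EuclideanSpace ℝ (Fin d)) 1)).toReal :=
    ENNReal.toReal_pos (measure_ball_pos _ _ one_pos).ne' measure_ball_lt_top.ne
  obtain ⟨K, hK, hKα⟩ := exists_pos_le_stableConst_mul_rpow d (zero_lt_one.trans hα₀) hϑ₀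
    (by positivity : 0 < 2 * c₂ ^ 2) hvol
  refine ⟨max 1 K⁻¹, le_max_left _ _, fun κ η hκ hη α hα A B hA hB hAc hBc x y hxy hxyη => ?_⟩
  have hη' : 2 * c₂ ^ 2 * ‖x - y‖ ≤ η := by
    rw [le_div_iff₀ (by positivity)] at hxyη
    nlinarith [min_le_right κ η]
  calc (max 1 K⁻¹)⁻¹ * ‖x - y‖ ^ (-α) ≤ K * ‖x - y‖ ^ (-α) := by
        gcongr
        exact inv_le_of_inv_le₀ hK (le_max_right _ _)
    _ ≤ _ := by
        gcongr
        exact hKα α hα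
    _ ≤ _ := le_integral_couplingDensity_add hd (by linarith [hα.1]) (hα.2.trans_lt hϑ₀) hc₂
        hA hB hAc hBc hκ (sub_ne_zero.1 (norm_pos_iff.1 hxy)) hη'

theorem stmt3 (d : ℕ) (hd : 1 ≤ d) (α₀ ϑ₀ c₂ : ℝ)
    (hα₀ : 1 < α₀) (hα₀ϑ₀ : α₀ < ϑ₀) (hϑ₀ : ϑ₀ < 2) (hc₂ : 1 ≤ c₂) :
    ∃ C ≥ (1 : ℝ), ∀ κ η : ℝ, 0 < κ → 0 < η → ∀ α ∈ Set.Icc α₀ ϑ₀,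
      ∀ A B : Matrix (Fin d) (Fin d) ℝ, IsUnit A → IsUnit B →
      (∀ v : EuclideanSpace ℝ (Fin d),
        c₂⁻¹ * ‖v‖ ^ 2 ≤ ‖Matrix.toEuclideanLin A v‖ ^ 2 ∧
          ‖Matrix.toEuclideanLin A v‖ ^ 2 ≤ c₂ * ‖v‖ ^ 2) →
      (∀ v : EuclideanSpace ℝ (Fin d),
        c₂⁻¹ * ‖v‖ ^ 2 ≤ ‖Matrix.toEuclideanLin B v‖ ^ 2 ∧
          ‖Matrix.toEuclideanLin B v‖ ^ 2 ≤ c₂ * ‖v‖ ^ 2) →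
      ∀ x y : EuclideanSpace ℝ (Fin d),
        0 < ‖x - y‖ → ‖x - y‖ ≤ min κ η / (4 * c₂ ^ 2) →
        C⁻¹ * ‖x - y‖ ^ (-α)
          ≤ ∫ z : EuclideanSpace ℝ (Fin d),
              (couplingDensity α η |(A⁻¹ * B).det| (psiInvMap κ A B x y) z +
                couplingDensity α η |(B⁻¹ * A).det| (psiMap κ A B x y) z) :=
  stmt3_general d hd α₀ ϑ₀ c₂ hα₀ hϑ₀ hc₂
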